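/- arXiv:2603.28893 — 7 statements merged into one kernel-verified Lean document; each statement's English description precedes it below -/
import Mathlib

section
/- Let (Ω, 𝓕, μ) be a probability space and θ : Ω → Ω an invertible, ergodic, measure-preserving transformation (θ and θ^{−1} measurable, μ ∘ θ^{−1} = μ, and every θ-invariant measurable set has measure 0 or 1). Let d ≥ 1 and let P : Ω → M_d(ℂ) be a measurable map such that for μ-almost every ω, P(ω) is an orthogonal projection matrix (P(ω)ᴴ = P(ω) and P(ω)² = P(ω)). Assume: (i) for μ-almost every ω, if P(ω) ≠ 0 then there exists N(ω) ∈ ℕ with P(θ^n ω) = 1 for all n ≥ N(ω); and (ii) μ{ω : P(ω) ≠ 0} > 0. Then P(ω) = 1 for μ-almost every ω. -/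
open MeasureTheory Filter Matrix

/-!
The set `S` of points whose forward orbit eventually stays in `{P = 1}` is measurable and
`θ`-invariant, and a.e. contains `{P ≠ 0}`, so it has positive measure; by ergodicity `S` is
a.e. everything. By Poincaré recurrence a.e. point of `{P ≠ 1}` returns to `{P ≠ 1}` infinitely
often, hence is not in `S`; so `{P ≠ 1}` is null.
-/

theorem measurableSet_setOf_matrix_eq {Ω m n α : Type*} [MeasurableSpace Ω] [Countable m]
    [Countable n] [MeasurableSpace α] [MeasurableSingletonClass α] {P : Ω → Matrix m n α}
    (hP : ∀ i j, Measurable fun ω => P ω i j) (A : Matrix m n α) :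
    MeasurableSet {ω | P ω = A} := by
  have : {ω | P ω = A} = ⋂ i, ⋂ j, (fun ω => P ω i j) ⁻¹' {A i j} := by
    ext ω
    simp [← Matrix.ext_iff]
  rw [this]
  exact .iInter fun i => .iInter fun j => hP i j (measurableSet_singleton _)

theorem preErgodic_of_forall_measure_eq_zero_or_one {α : Type*} [MeasurableSpace α]
    {μ : Measure α} [IsProbabilityMeasure μ] {f : α → α}
    (h : ∀ s, MeasurableSet s → f ⁻¹' s = s → μ s = 0 ∨ μ s = 1) : PreErgodic f μ where
  aeconst_set s hs hfs := by
    refine eventuallyConst_set.2 ((h s hs hfs).symm.imp (fun h1 => ?_) fun h0 => ?_)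
    · rwa [ae_mem_iff_measure_eq hs.nullMeasurableSet, measure_univ]
    · exact measure_eq_zero_iff_ae_notMem.1 h0

section Absorption

variable {α : Type*} {f : α → α} {s : Set α}

def absorbedSet (f : α → α) (s : Set α) : Set α := {x | ∀ᶠ n in atTop, f^[n] x ∈ s}

theorem preimage_absorbedSet (f : α → α) (s : Set α) :
    f ⁻¹' absorbedSet f s = absorbedSet f s := by
  ext x
  conv_rhs => rw [absorbedSet, Set.mem_ofPred_eq, ← map_add_atTop_eq_nat 1, eventually_map]
  rfl

variable [MeasurableSpace α]

theorem measurableSet_absorbedSet (hf : Measurable f) (hs : MeasurableSet s) :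
    MeasurableSet (absorbedSet f s) := by
  have : absorbedSet f s = liminf (fun n => f^[n] ⁻¹' s) atTop := by
    ext x
    simp [absorbedSet, Filter.mem_liminf_iff_eventually_mem]
  rw [this]
  exact .measurableSet_liminf fun n => hf.iterate n hs

theorem MeasureTheory.Conservative.ae_mem_of_mem_absorbedSet {μ : Measure α}
    (hf : Conservative f μ) (hs : MeasurableSet s) : ∀ᵐ x ∂μ, x ∈ absorbedSet f s → x ∈ s := by
  filter_upwards [hf.ae_mem_imp_frequently_image_mem hs.compl.nullMeasurableSet] with x hrec habs
  by_contra hx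
  obtain ⟨n, hns, hn⟩ := ((hrec hx).and_eventually habs).exists
  exact hns hn

theorem Ergodic.ae_mem_of_measure_absorbedSet_ne_zero {μ : Measure α} [IsFiniteMeasure μ]
    (hf : Ergodic f μ) (hs : MeasurableSet s) (hpos : μ (absorbedSet f s) ≠ 0) :
    ∀ᵐ x ∂μ, x ∈ s := by
  have hS : ∀ᵐ x ∂μ, x ∈ absorbedSet f s :=
    (hf.ae_mem_or_ae_notMem (measurableSet_absorbedSet hf.measurable hs)
      (preimage_absorbedSet f s)).resolve_right fun h => hpos (measure_eq_zero_iff_ae_notMem.2 h)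
  filter_upwards [hS, hf.conservative.ae_mem_of_mem_absorbedSet hs] with x hx h
  exact h hx

end Absorption

theorem stmt7_general
    {Ω : Type*} [MeasurableSpace Ω] (μ : Measure Ω) [IsProbabilityMeasure μ]
    (θ : Ω → Ω)
    (hmp : MeasurePreserving θ μ μ)
    (herg : ∀ s : Set Ω, MeasurableSet s → θ ⁻¹' s = s → μ s = 0 ∨ μ s = 1)
    {d : ℕ}
    (P : Ω → Matrix (Fin d) (Fin d) ℂ)
    (hPmeas : ∀ i j, Measurable fun ω => P ω i j)
    (habs : ∀ᵐ ω ∂μ, P ω ≠ 0 → ∃ N : ℕ, ∀ n, N ≤ n → P (θ^[n] ω) = 1)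
    (hpos : 0 < μ {ω | P ω ≠ 0}) :
    ∀ᵐ ω ∂μ, P ω = 1 := by
  have hergodic : Ergodic θ μ := ⟨hmp, preErgodic_of_forall_measure_eq_zero_or_one herg⟩
  have hsub : {ω | P ω ≠ 0} ≤ᵐ[μ] absorbedSet θ {ω | P ω = 1} := by
    filter_upwards [habs] with ω h hω
    obtain ⟨N, hN⟩ := h hω
    exact eventually_atTop.2 ⟨N, hN⟩
  exact hergodic.ae_mem_of_measure_absorbedSet_ne_zero (measurableSet_setOf_matrix_eq hPmeas 1)
    (hpos.trans_le (measure_mono_ae hsub)).ne'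

/-- **Ergodic dichotomy for eventually-absorbed random projections.**
Let `θ` be an invertible, ergodic, measure-preserving transformation of a
probability space, and `P` a measurable family of orthogonal projection
matrices such that a.e. on `{P ≠ 0}` the forward orbit is eventually mapped to
the identity.  If `{P ≠ 0}` has positive measure, then `P = 1` almost
everywhere. -/
theorem stmt7
    {Ω : Type*} [MeasurableSpace Ω] (μ : Measure Ω) [IsProbabilityMeasure μ]
    (θ θinv : Ω → Ω)
    (hθmeas : Measurable θ) (hθinvmeas : Measurable θinv)
    (hinv1 : Function.LeftInverse θinv θ) (hinv2 : Function.RightInverse θinv θ)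
    (hmp : MeasurePreserving θ μ μ)
    (herg : ∀ s : Set Ω, MeasurableSet s → θ ⁻¹' s = s → μ s = 0 ∨ μ s = 1)
    {d : ℕ} (hd : 1 ≤ d)
    (P : Ω → Matrix (Fin d) (Fin d) ℂ)
    (hPmeas : ∀ i j, Measurable fun ω => P ω i j)
    (hproj : ∀ᵐ ω ∂μ, (P ω)ᴴ = P ω ∧ P ω * P ω = P ω)
    (habs : ∀ᵐ ω ∂μ, P ω ≠ 0 → ∃ N : ℕ, ∀ n, N ≤ n → P (θ^[n] ω) = 1)
    (hpos : 0 < μ {ω | P ω ≠ 0}) :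
    ∀ᵐ ω ∂μ, P ω = 1 :=
  stmt7_general μ θ hmp herg P hPmeas habs hpos
end

section
/- Let d ≥ 1, L ≥ 1, ε₀ > 0, and let T_1, …, T_n be d × d real column-stochastic matrices (nonnegative entries, each column sums to 1). Assume that for every j ≥ 0 with (j+1)·L ≤ n, the product T_{jL+L} ⋯ T_{jL+1} of the (j+1)-st consecutive block of L matrices has all entries ≥ ε₀. Then for any two probability vectors x, y : Fin d → ℝ, the ℓ¹ distance satisfies ‖ T_n ⋯ T_1 x − T_n ⋯ T_1 y ‖₁ ≤ 2·(1 − d·ε₀)^{⌊n/L⌋}. -/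
open Matrix Finset


def CS10 {d : ℕ} (A : Matrix (Fin d) (Fin d) ℝ) : Prop :=
  (∀ k g, 0 ≤ A k g) ∧ (∀ g, ∑ k, A k g = 1)

lemma cs_one {d : ℕ} (hd : 1 ≤ d) : CS10 (1 : Matrix (Fin d) (Fin d) ℝ) := by
  constructor
  · intro k g; by_cases h : k = g <;> simp [Matrix.one_apply, h]
  · intro g; simp [Matrix.one_apply]

lemma cs_mul {d : ℕ} {A B : Matrix (Fin d) (Fin d) ℝ} (hA : CS10 A) (hB : CS10 B) :
    CS10 (A * B) := by
  constructor
  · intro k g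
    rw [Matrix.mul_apply]
    exact Finset.sum_nonneg fun j _ => mul_nonneg (hA.1 k j) (hB.1 j g)
  · intro g
    have : ∑ k, ∑ j, A k j * B j g = ∑ j, (∑ k, A k j) * B j g := by
      rw [Finset.sum_comm]; simp [Finset.sum_mul]
    simp only [Matrix.mul_apply]
    rw [this]; simp [hA.2, hB.2]

lemma cs_listProd {d : ℕ} (hd : 1 ≤ d) {l : List (Matrix (Fin d) (Fin d) ℝ)}
    (h : ∀ A ∈ l, CS10 A) : CS10 l.prod := by
  induction l with
  | nil => simpa using cs_one hd
  | cons a t ih =>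
      rw [List.prod_cons]
      exact cs_mul (h a (by simp)) (ih fun A hA => h A (by simp [hA]))

lemma cs_sum_mulVec {d : ℕ} {A : Matrix (Fin d) (Fin d) ℝ} (hA : CS10 A) (v : Fin d → ℝ) :
    ∑ k, A.mulVec v k = ∑ g, v g := by
  simp only [Matrix.mulVec, dotProduct]
  rw [Finset.sum_comm]
  simp [← Finset.sum_mul, hA.2]

lemma cs_nonexp {d : ℕ} {A : Matrix (Fin d) (Fin d) ℝ} (hA : CS10 A) (v : Fin d → ℝ) :
    ∑ k, |A.mulVec v k| ≤ ∑ g, |v g| := by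
  calc ∑ k, |A.mulVec v k| ≤ ∑ k, ∑ g, A k g * |v g| := by
        refine Finset.sum_le_sum fun k _ => ?_
        calc |A.mulVec v k| = |∑ g, A k g * v g| := rfl
          _ ≤ ∑ g, |A k g * v g| := Finset.abs_sum_le_sum_abs _ _
          _ = ∑ g, A k g * |v g| := by
              refine Finset.sum_congr rfl fun g _ => ?_
              rw [abs_mul, abs_of_nonneg (hA.1 k g)]
    _ = ∑ g, (∑ k, A k g) * |v g| := by rw [Finset.sum_comm]; simp [Finset.sum_mul]
    _ = ∑ g, |v g| := by simp [hA.2]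

lemma cs_contract {d : ℕ} {A : Matrix (Fin d) (Fin d) ℝ} (hA : CS10 A) {ε₀ : ℝ}
    (hε : ∀ k g, ε₀ ≤ A k g) {v : Fin d → ℝ} (hv : ∑ g, v g = 0) :
    ∑ k, |A.mulVec v k| ≤ (1 - d * ε₀) * ∑ g, |v g| := by
  have key : ∀ k, A.mulVec v k = ∑ g, (A k g - ε₀) * v g := by
    intro k
    simp only [Matrix.mulVec, dotProduct, sub_mul, Finset.sum_sub_distrib,
      ← Finset.mul_sum, hv, mul_zero, sub_zero]
  have hcol : ∀ g : Fin d, ∑ k : Fin d, (A k g - ε₀) = 1 - d * ε₀ := by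
    intro g
    rw [Finset.sum_sub_distrib, hA.2 g]
    simp [mul_comm]
  calc ∑ k, |A.mulVec v k| ≤ ∑ k, ∑ g, (A k g - ε₀) * |v g| := by
        refine Finset.sum_le_sum fun k _ => ?_
        rw [key k]
        calc |∑ g, (A k g - ε₀) * v g| ≤ ∑ g, |(A k g - ε₀) * v g| :=
              Finset.abs_sum_le_sum_abs _ _
          _ = ∑ g, (A k g - ε₀) * |v g| := by
              refine Finset.sum_congr rfl fun g _ => ?_
              rw [abs_mul, abs_of_nonneg (by linarith [hε k g])]
    _ = ∑ g, (∑ k, (A k g - ε₀)) * |v g| := by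
        rw [Finset.sum_comm]
        exact Finset.sum_congr rfl fun g _ => (Finset.sum_mul _ _ _).symm
    _ = (1 - ↑d * ε₀) * ∑ g, |v g| := by
        rw [Finset.mul_sum]
        exact Finset.sum_congr rfl fun g _ => by rw [hcol g]

lemma prod_split {d : ℕ} (T : ℕ → Matrix (Fin d) (Fin d) ℝ) (a b : ℕ) :
    ((List.range (b + a)).map fun i => T (b + a - i)).prod =
    (((List.range b).map fun i => T (b + a - i)).prod) *
      ((List.range a).map fun i => T (a - i)).prod := by
  rw [List.range_add, List.map_append, List.prod_append, List.map_map]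
  have : ((fun i => T (b + a - i)) ∘ fun x => b + x) = fun i => T (a - i) := by
    funext i
    simp only [Function.comp_apply]
    rw [show b + a - (b + i) = a - i by omega]
  rw [this]

/-- **Blockwise weak-ergodicity estimate for inhomogeneous products.**
If `T 1, …, T n` are column-stochastic and every consecutive block of `L` of
them has a product with all entries `≥ ε₀`, then the product `T n ⋯ T 1`
contracts any two probability vectors to ℓ¹ distance at most
`2 (1 - d ε₀)^⌊n/L⌋`. -/
theorem stmt10 {d : ℕ} (hd : 1 ≤ d) {L n : ℕ} (hL : 1 ≤ L)
    (ε₀ : ℝ) (hε₀ : 0 < ε₀)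
    (T : ℕ → Matrix (Fin d) (Fin d) ℝ)
    (hTnonneg : ∀ i, 1 ≤ i → i ≤ n → ∀ k g, 0 ≤ T i k g)
    (hTcol : ∀ i, 1 ≤ i → i ≤ n → ∀ g, ∑ k, T i k g = 1)
    (hblock : ∀ j : ℕ, (j + 1) * L ≤ n →
      ∀ k g, ε₀ ≤ (((List.range L).map fun i => T (j * L + L - i)).prod) k g)
    (x y : Fin d → ℝ)
    (hx0 : ∀ k, 0 ≤ x k) (hx1 : ∑ k, x k = 1)
    (hy0 : ∀ k, 0 ≤ y k) (hy1 : ∑ k, y k = 1)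
    (M : Matrix (Fin d) (Fin d) ℝ)
    (hM : M = ((List.range n).map fun i => T (n - i)).prod) :
    ∑ k, |M.mulVec x k - M.mulVec y k| ≤ 2 * (1 - d * ε₀) ^ (n / L) := by
  -- the difference vector
  set v : Fin d → ℝ := fun k => x k - y k with hvdef
  have hv0 : ∑ k, v k = 0 := by
    simp [hvdef, Finset.sum_sub_distrib, hx1, hy1]
  have hvbd : ∑ k, |v k| ≤ 2 := by
    calc ∑ k, |v k| ≤ ∑ k, (x k + y k) := by
          refine Finset.sum_le_sum fun k _ => ?_
          have h1 : |x k - y k| ≤ |x k| + |y k| := abs_sub _ _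
          rwa [abs_of_nonneg (hx0 k), abs_of_nonneg (hy0 k)] at h1
      _ = 2 := by rw [Finset.sum_add_distrib, hx1, hy1]; norm_num
  have hMv : ∀ k, M.mulVec x k - M.mulVec y k = M.mulVec v k := by
    intro k
    simp [hvdef, Matrix.mulVec, dotProduct, mul_sub, Finset.sum_sub_distrib]
  -- column-stochasticity of partial products
  have hFCS : ∀ m, m ≤ n → CS10 (((List.range m).map fun i => T (m - i)).prod) := by
    intro m hm
    apply cs_listProd hd
    intro A hA
    simp only [List.mem_map, List.mem_range] at hA
    obtain ⟨i, hi, rfl⟩ := hA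
    exact ⟨hTnonneg _ (by omega) (by omega), hTcol _ (by omega) (by omega)⟩
  have hBCS : ∀ j : ℕ, (j + 1) * L ≤ n →
      CS10 (((List.range L).map fun i => T (j * L + L - i)).prod) := by
    intro j hj
    apply cs_listProd hd
    intro A hA
    simp only [List.mem_map, List.mem_range] at hA
    obtain ⟨i, hi, rfl⟩ := hA
    have hjL : (j + 1) * L = j * L + L := by ring
    exact ⟨hTnonneg _ (by omega) (by omega), hTcol _ (by omega) (by omega)⟩
  have hone : ∀ j : ℕ, (j + 1) * L ≤ n → (d : ℝ) * ε₀ ≤ 1 := by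
    intro j hj
    have g0 : Fin d := ⟨0, hd⟩
    have hc := (hBCS j hj).2 g0
    have hle : ∑ k : Fin d, ε₀ ≤ ∑ k : Fin d,
        (((List.range L).map fun i => T (j * L + L - i)).prod) k g0 :=
      Finset.sum_le_sum fun k _ => hblock j hj k g0
    rw [hc] at hle
    simpa [Finset.card_univ, mul_comm] using hle
  -- blockwise induction
  have hind : ∀ j : ℕ, j * L ≤ n →
      ∑ k, |(((List.range (j * L)).map fun i => T (j * L - i)).prod).mulVec v k|
        ≤ (1 - d * ε₀) ^ j * ∑ k, |v k| := by
    intro j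
    induction j with
    | zero => intro _; simp
    | succ j ih =>
        intro hjn
        have hjL : (j + 1) * L = j * L + L := by ring
        have hj : j * L ≤ n := by omega
        have hblk := hblock j (by omega)
        have hBcs := hBCS j (by omega)
        have h1 := hone j (by omega)
        -- split the product
        have hsplit := prod_split T (j * L) L
        have hLjL : L + j * L = (j + 1) * L := by ring
        rw [hLjL] at hsplit
        set F := ((List.range (j * L)).map fun i => T (j * L - i)).prod with hF
        set B := ((List.range L).map fun i => T ((j + 1) * L - i)).prod with hB
        have hB' : B = ((List.range L).map fun i => T (j * L + L - i)).prod := by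
          rw [hB]
          congr 1
          refine List.map_congr_left fun i hi => ?_
          rw [show (j + 1) * L - i = j * L + L - i by omega]
        have hFv0 : ∑ k, F.mulVec v k = 0 := by
          rw [cs_sum_mulVec (hFCS _ hj) v, hv0]
        calc ∑ k, |(((List.range ((j+1) * L)).map fun i => T ((j+1) * L - i)).prod).mulVec v k|
            = ∑ k, |B.mulVec (F.mulVec v) k| := by
              rw [hsplit, ← Matrix.mulVec_mulVec]
          _ ≤ (1 - d * ε₀) * ∑ k, |F.mulVec v k| := by
              rw [hB'] at *
              exact cs_contract hBcs hblk hFv0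
          _ ≤ (1 - d * ε₀) * ((1 - d * ε₀) ^ j * ∑ k, |v k|) := by
              apply mul_le_mul_of_nonneg_left (ih hj)
              linarith
          _ = (1 - d * ε₀) ^ (j + 1) * ∑ k, |v k| := by ring
  -- final splitting
  have hq : n / L * L ≤ n := Nat.div_mul_le_self n L
  have hnsplit : n % L + n / L * L = n := Nat.mod_add_div' n L
  have hsplit := prod_split T (n / L * L) (n % L)
  rw [hnsplit] at hsplit
  have hmodle : n % L ≤ n := Nat.mod_le n L
  have hRemCS : CS10 (((List.range (n % L)).map fun i => T (n - i)).prod) := by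
    apply cs_listProd hd
    intro A hA
    simp only [List.mem_map, List.mem_range] at hA
    obtain ⟨i, hi, rfl⟩ := hA
    exact ⟨hTnonneg _ (by omega) (by omega), hTcol _ (by omega) (by omega)⟩
  have hmain : ∑ k, |M.mulVec v k| ≤ (1 - d * ε₀) ^ (n / L) * ∑ k, |v k| := by
    rw [hM, hsplit, ← Matrix.mulVec_mulVec]
    calc ∑ k, |(((List.range (n % L)).map fun i => T (n - i)).prod).mulVec
            ((((List.range (n / L * L)).map fun i => T (n / L * L - i)).prod).mulVec v) k|
        ≤ ∑ k, |(((List.range (n / L * L)).map fun i => T (n / L * L - i)).prod).mulVec v k| :=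
          cs_nonexp hRemCS _
      _ ≤ (1 - d * ε₀) ^ (n / L) * ∑ k, |v k| := hind (n / L) hq
  have hgoal : ∑ k, |M.mulVec x k - M.mulVec y k| = ∑ k, |M.mulVec v k| :=
    Finset.sum_congr rfl fun k _ => by rw [hMv k]
  rw [hgoal]
  rcases Nat.eq_zero_or_pos (n / L) with h0 | hpos
  · rw [h0] at hmain ⊢
    simpa using hmain.trans (by simpa using hvbd)
  · have h1 : (d : ℝ) * ε₀ ≤ 1 := by
      refine hone (n / L - 1) ?_
      have : (n / L - 1 + 1) = n / L := by omega
      rw [this]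
      exact hq
    have hpow : 0 ≤ (1 - (d : ℝ) * ε₀) ^ (n / L) := pow_nonneg (by linarith) _
    calc ∑ k, |M.mulVec v k| ≤ (1 - d * ε₀) ^ (n / L) * ∑ k, |v k| := hmain
      _ ≤ (1 - d * ε₀) ^ (n / L) * 2 := mul_le_mul_of_nonneg_left hvbd hpow
      _ = 2 * (1 - d * ε₀) ^ (n / L) := by ring
end

section
/- Let (Ω, 𝓕) be a measurable space and θ : Ω → Ω a bijection with θ and θ^{−1} measurable. Let d ≥ 1 and let T : Ω → M_d(ℝ) be measurable with T_ω column-stochastic for every ω. Assume there exist L ≥ 1 and ε₀ > 0 such that for every ω ∈ Ω, the product T_{θ^L ω} ⋯ T_{θ ω} has all entries ≥ ε₀, and set λ := 1 − d·ε₀ (so λ ∈ [0, 1)). Then there exists a measurable map π : Ω → (Fin d → ℝ) such that: (a) π(ω) is a probability vector for every ω; (b) T_{θω} · π(ω) = π(θω) for every ω (equivariance); and (c) for every probability vector x, every ω and every n ≥ 1, ‖ (T_{θ^n ω} ⋯ T_{θ ω}) x − π(θ^n ω) ‖₁ ≤ 2·λ^{⌊n/L⌋}. -/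
open Matrix Finset Filter Topology

section Aux
variable {d : ℕ}

/-- Column-stochastic. -/
def CSmat (A : Matrix (Fin d) (Fin d) ℝ) : Prop :=
  (∀ k g, 0 ≤ A k g) ∧ (∀ g, ∑ k, A k g = 1)

lemma CSmat_one : CSmat (1 : Matrix (Fin d) (Fin d) ℝ) := by
  constructor
  · intro k g
    by_cases h : k = g <;> simp [Matrix.one_apply, h]
  · intro g
    simp [Matrix.one_apply]

lemma CSmat_mul {A B : Matrix (Fin d) (Fin d) ℝ} (hA : CSmat A) (hB : CSmat B) :
    CSmat (A * B) := by
  constructor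
  · intro k g
    rw [Matrix.mul_apply]
    exact Finset.sum_nonneg fun j _ => mul_nonneg (hA.1 k j) (hB.1 j g)
  · intro g
    simp only [Matrix.mul_apply]
    rw [Finset.sum_comm]
    calc ∑ j, ∑ k, A k j * B j g = ∑ j, (∑ k, A k j) * B j g := by
          simp [Finset.sum_mul]
      _ = ∑ j, B j g := by simp [hA.2]
      _ = 1 := hB.2 g

lemma l1_bound {B : Matrix (Fin d) (Fin d) ℝ} (hB0 : ∀ k g, 0 ≤ B k g) {c : ℝ}
    (hc : ∀ g, ∑ k, B k g = c) (v : Fin d → ℝ) :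
    ∑ k, |(B *ᵥ v) k| ≤ c * ∑ g, |v g| := by
  calc ∑ k, |(B *ᵥ v) k| ≤ ∑ k, ∑ g, B k g * |v g| := by
        refine Finset.sum_le_sum fun k _ => ?_
        calc |(B *ᵥ v) k| = |∑ g, B k g * v g| := by
              simp [Matrix.mulVec, dotProduct]
          _ ≤ ∑ g, |B k g * v g| := Finset.abs_sum_le_sum_abs _ _
          _ = ∑ g, B k g * |v g| := by
              refine Finset.sum_congr rfl fun g _ => ?_
              rw [abs_mul, abs_of_nonneg (hB0 k g)]
    _ = ∑ g, (∑ k, B k g) * |v g| := by rw [Finset.sum_comm]; simp [Finset.sum_mul]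
    _ = ∑ g, c * |v g| := by simp [hc]
    _ = c * ∑ g, |v g| := by rw [Finset.mul_sum]

lemma l1_nonexp {A : Matrix (Fin d) (Fin d) ℝ} (hA : CSmat A) (v : Fin d → ℝ) :
    ∑ k, |(A *ᵥ v) k| ≤ ∑ g, |v g| := by
  simpa using l1_bound hA.1 hA.2 v

lemma sum_mulVec {A : Matrix (Fin d) (Fin d) ℝ} (hA : CSmat A) (v : Fin d → ℝ) :
    ∑ k, (A *ᵥ v) k = ∑ g, v g := by
  calc ∑ k, (A *ᵥ v) k = ∑ k, ∑ g, A k g * v g := by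
        simp [Matrix.mulVec, dotProduct]
    _ = ∑ g, (∑ k, A k g) * v g := by rw [Finset.sum_comm]; simp [Finset.sum_mul]
    _ = ∑ g, v g := by simp [hA.2]

lemma l1_contract {A : Matrix (Fin d) (Fin d) ℝ} (hA : CSmat A) {ε : ℝ}
    (hε : ∀ k g, ε ≤ A k g) (v : Fin d → ℝ) (hv : ∑ g, v g = 0) :
    ∑ k, |(A *ᵥ v) k| ≤ (1 - d * ε) * ∑ g, |v g| := by
  set B : Matrix (Fin d) (Fin d) ℝ := Matrix.of fun k g => A k g - ε with hB
  have hB0 : ∀ k g, 0 ≤ B k g := fun k g => sub_nonneg.2 (hε k g)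
  have hBcol : ∀ g, ∑ k, B k g = 1 - d * ε := by
    intro g
    simp [hB, Finset.sum_sub_distrib, hA.2 g]
  have hAv : A *ᵥ v = B *ᵥ v := by
    funext k
    simp only [Matrix.mulVec, dotProduct, hB, Matrix.of_apply, sub_mul,
      Finset.sum_sub_distrib]
    rw [← Finset.mul_sum, hv, mul_zero, sub_zero]
  rw [hAv]
  exact l1_bound hB0 hBcol v

end Aux

section Pm
variable {Ω : Type*} {d : ℕ}

/-- The forward product `T(θ^n ω) ⋯ T(θ ω)`. -/
def Pm (θ : Ω → Ω) (T : Ω → Matrix (Fin d) (Fin d) ℝ) (n : ℕ) (ω : Ω) :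
    Matrix (Fin d) (Fin d) ℝ :=
  ((List.range n).map fun i => T (θ^[n - i] ω)).prod

lemma Pm_zero (θ : Ω → Ω) (T : Ω → Matrix (Fin d) (Fin d) ℝ) (ω : Ω) :
    Pm θ T 0 ω = 1 := by simp [Pm]

lemma Pm_succ (θ : Ω → Ω) (T : Ω → Matrix (Fin d) (Fin d) ℝ) (n : ℕ) (ω : Ω) :
    Pm θ T (n + 1) ω = T (θ^[n + 1] ω) * Pm θ T n ω := by
  simp only [Pm, List.range_succ_eq_map, List.map_cons, List.map_map, List.prod_cons,
    Nat.sub_zero]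
  congr 1
  refine congrArg List.prod (List.map_congr_left fun i hi => ?_)
  simp [Function.comp, Nat.succ_sub_succ]

lemma Pm_add (θ : Ω → Ω) (T : Ω → Matrix (Fin d) (Fin d) ℝ) (m n : ℕ) (ω : Ω) :
    Pm θ T (m + n) ω = Pm θ T m (θ^[n] ω) * Pm θ T n ω := by
  induction m with
  | zero => simp [Pm_zero]
  | succ m ih =>
      have : m + 1 + n = (m + n) + 1 := by omega
      rw [this, Pm_succ, ih, Pm_succ, ← mul_assoc]
      rw [show m + n + 1 = (m + 1) + n by omega, Function.iterate_add_apply θ (m + 1) n ω]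

lemma CSmat_Pm {θ : Ω → Ω} {T : Ω → Matrix (Fin d) (Fin d) ℝ}
    (hT : ∀ ω, CSmat (T ω)) (n : ℕ) (ω : Ω) : CSmat (Pm θ T n ω) := by
  induction n with
  | zero => rw [Pm_zero]; exact CSmat_one
  | succ n ih => rw [Pm_succ]; exact CSmat_mul (hT _) ih

lemma Pm_contract {θ : Ω → Ω} {T : Ω → Matrix (Fin d) (Fin d) ℝ}
    (hT : ∀ ω, CSmat (T ω)) {L : ℕ} (hL : 1 ≤ L) {ε₀ : ℝ}
    (hblock : ∀ ω k g, ε₀ ≤ Pm θ T L ω k g) {lam : ℝ} (hlam : lam = 1 - d * ε₀)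
    (hlam0 : 0 ≤ lam) :
    ∀ n ω (v : Fin d → ℝ), ∑ g, v g = 0 →
      ∑ k, |(Pm θ T n ω *ᵥ v) k| ≤ lam ^ (n / L) * ∑ g, |v g| := by
  intro n
  induction n using Nat.strong_induction_on with
  | _ n ih =>
    intro ω v hv
    rcases lt_or_ge n L with h | h
    · rw [Nat.div_eq_of_lt h, pow_zero, one_mul]
      exact l1_nonexp (CSmat_Pm hT n ω) v
    · have hn : n = (n - L) + L := by omega
      have hdecomp : Pm θ T n ω = Pm θ T (n - L) (θ^[L] ω) * Pm θ T L ω := by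
        conv_lhs => rw [hn]
        exact Pm_add θ T (n - L) L ω
      have hw : ∑ g, (Pm θ T L ω *ᵥ v) g = 0 := by
        rw [sum_mulVec (CSmat_Pm hT L ω) v, hv]
      have h1 : ∑ k, |(Pm θ T (n - L) (θ^[L] ω) *ᵥ (Pm θ T L ω *ᵥ v)) k| ≤
          lam ^ ((n - L) / L) * ∑ g, |(Pm θ T L ω *ᵥ v) g| :=
        ih (n - L) (by omega) (θ^[L] ω) _ hw
      have h2 : ∑ g, |(Pm θ T L ω *ᵥ v) g| ≤ lam * ∑ g, |v g| := by
        rw [hlam]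
        exact l1_contract (CSmat_Pm hT L ω) (hblock ω) v hv
      have hdiv : n / L = (n - L) / L + 1 := Nat.div_eq_sub_div (by omega) h
      calc ∑ k, |(Pm θ T n ω *ᵥ v) k|
          = ∑ k, |(Pm θ T (n - L) (θ^[L] ω) *ᵥ (Pm θ T L ω *ᵥ v)) k| := by
            rw [hdecomp, Matrix.mulVec_mulVec]
        _ ≤ lam ^ ((n - L) / L) * ∑ g, |(Pm θ T L ω *ᵥ v) g| := h1
        _ ≤ lam ^ ((n - L) / L) * (lam * ∑ g, |v g|) := by
            exact mul_le_mul_of_nonneg_left h2 (pow_nonneg hlam0 _)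
        _ = lam ^ (n / L) * ∑ g, |v g| := by rw [hdiv, pow_succ]; ring

lemma Pm_measurable {Ω : Type*} [MeasurableSpace Ω] {θ : Ω → Ω} (hθ : Measurable θ)
    {T : Ω → Matrix (Fin d) (Fin d) ℝ} (hTmeas : ∀ k g, Measurable fun ω => T ω k g)
    (n : ℕ) (k g : Fin d) : Measurable fun ω => Pm θ T n ω k g := by
  induction n generalizing k g with
  | zero => simp only [Pm_zero]; exact measurable_const
  | succ n ih =>
      simp only [Pm_succ, Matrix.mul_apply]
      exact Finset.measurable_sum _ fun j _ =>
        ((hTmeas k j).comp (hθ.iterate (n + 1))).mul (ih j g)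

end Pm

/-- **Construction of the dynamically stationary label distribution.**
For a measurable cocycle of column-stochastic matrices over an invertible
measurable transformation, with a uniform block positivity condition, there is
a measurable equivariant family of probability vectors `π` attracting every
probability vector at rate `2 λ^⌊n/L⌋`, `λ = 1 - d ε₀`. -/
theorem stmt11
    {Ω : Type*} [MeasurableSpace Ω]
    (θ θinv : Ω → Ω) (hθ : Measurable θ) (hθinv : Measurable θinv)
    (hinv1 : Function.LeftInverse θinv θ) (hinv2 : Function.RightInverse θinv θ)
    {d : ℕ} (hd : 1 ≤ d)
    (T : Ω → Matrix (Fin d) (Fin d) ℝ)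
    (hTmeas : ∀ k g, Measurable fun ω => T ω k g)
    (hTnonneg : ∀ ω k g, 0 ≤ T ω k g)
    (hTcol : ∀ ω g, ∑ k, T ω k g = 1)
    {L : ℕ} (hL : 1 ≤ L) (ε₀ : ℝ) (hε₀ : 0 < ε₀)
    (hblock : ∀ ω k g,
      ε₀ ≤ (((List.range L).map fun i => T (θ^[L - i] ω)).prod) k g)
    (lam : ℝ) (hlam : lam = 1 - d * ε₀) :
    ∃ π : Ω → Fin d → ℝ,
      (∀ k, Measurable fun ω => π ω k) ∧
      (∀ ω, (∀ k, 0 ≤ π ω k) ∧ ∑ k, π ω k = 1) ∧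
      (∀ ω, (T (θ ω)).mulVec (π ω) = π (θ ω)) ∧
      (∀ x : Fin d → ℝ, (∀ k, 0 ≤ x k) → ∑ k, x k = 1 →
        ∀ ω, ∀ n, 1 ≤ n →
          ∑ k, |((((List.range n).map fun i => T (θ^[n - i] ω)).prod).mulVec x) k
                  - π (θ^[n] ω) k|
            ≤ 2 * lam ^ (n / L)) := by
  rcases isEmpty_or_nonempty Ω with hE | hNE
  · exact ⟨fun _ _ => 0, fun k => measurable_const,
      fun ω => (IsEmpty.false ω).elim, fun ω => (IsEmpty.false ω).elim,
      fun x _ _ ω => (IsEmpty.false ω).elim⟩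
  obtain ⟨ω₀⟩ := hNE
  have hT : ∀ ω, CSmat (T ω) := fun ω => ⟨hTnonneg ω, hTcol ω⟩
  have hblock' : ∀ ω k g, ε₀ ≤ Pm θ T L ω k g := hblock
  have hd0 : (0:ℝ) < d := by exact_mod_cast Nat.lt_of_lt_of_le Nat.zero_lt_one hd
  have hL0 : 0 < L := hL
  have hlam1 : lam < 1 := by rw [hlam]; nlinarith
  have hlam0 : 0 ≤ lam := by
    have hcs := CSmat_Pm (θ := θ) hT L ω₀
    set k0 : Fin d := ⟨0, by omega⟩
    have h1 : (d:ℝ) * ε₀ ≤ ∑ k, Pm θ T L ω₀ k k0 := by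
      calc (d:ℝ) * ε₀ = ∑ _k : Fin d, ε₀ := by
            simp [Finset.sum_const, Finset.card_univ, mul_comm]
        _ ≤ ∑ k, Pm θ T L ω₀ k k0 := Finset.sum_le_sum fun k _ => hblock' ω₀ k k0
    rw [hlam]
    have h2 := hcs.2 k0
    linarith
  set u : Fin d → ℝ := fun _ => (d:ℝ)⁻¹ with hu
  have hu0 : ∀ k, 0 ≤ u k := fun k => inv_nonneg.2 hd0.le
  have hu1 : ∑ k, u k = 1 := by
    simp only [hu, Finset.sum_const, Finset.card_univ, Fintype.card_fin, nsmul_eq_mul]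
    exact mul_inv_cancel₀ (ne_of_gt hd0)
  set s : Ω → ℕ → (Fin d → ℝ) := fun ω m => Pm θ T m (θinv^[m] ω) *ᵥ u with hs
  have hsprob : ∀ ω m, (∀ k, 0 ≤ s ω m k) ∧ ∑ k, s ω m k = 1 := by
    intro ω m
    constructor
    · intro k
      show (0:ℝ) ≤ ∑ g, Pm θ T m (θinv^[m] ω) k g * u g
      exact Finset.sum_nonneg fun g _ =>
        mul_nonneg ((CSmat_Pm hT m _).1 k g) (hu0 g)
    · show ∑ k, (Pm θ T m (θinv^[m] ω) *ᵥ u) k = 1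
      rw [sum_mulVec (CSmat_Pm hT m _) u, hu1]
  have hsdec : ∀ ω m j, s ω (m + j) = Pm θ T m (θinv^[m] ω) *ᵥ s (θinv^[m] ω) j := by
    intro ω m j
    have h1 : θinv^[m + j] ω = θinv^[j] (θinv^[m] ω) := by
      rw [add_comm]; exact Function.iterate_add_apply θinv j m ω
    have h2 : θ^[j] (θinv^[m + j] ω) = θinv^[m] ω := by
      rw [h1]; exact (hinv2.iterate j) _
    show Pm θ T (m + j) (θinv^[m + j] ω) *ᵥ u = _
    rw [Pm_add θ T m j (θinv^[m + j] ω), ← Matrix.mulVec_mulVec, h2, h1]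
  have hdist : ∀ ω m j k, |s ω (m + j) k - s ω m k| ≤ 2 * lam ^ (m / L) := by
    intro ω m j k
    have hv : ∑ g, (s (θinv^[m] ω) j - u) g = 0 := by
      simp only [Pi.sub_apply, Finset.sum_sub_distrib, (hsprob _ j).2, hu1, sub_self]
    have h1 : ∀ k', s ω (m + j) k' - s ω m k'
        = (Pm θ T m (θinv^[m] ω) *ᵥ (s (θinv^[m] ω) j - u)) k' := by
      intro k'
      rw [Matrix.mulVec_sub, hsdec ω m j]
      rfl
    have h2 := Pm_contract hT hL hblock' hlam hlam0 m (θinv^[m] ω) _ hv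
    have h3 : ∑ g, |(s (θinv^[m] ω) j - u) g| ≤ 2 := by
      calc ∑ g, |(s (θinv^[m] ω) j - u) g|
          ≤ ∑ g, (|s (θinv^[m] ω) j g| + |u g|) :=
            Finset.sum_le_sum fun g _ => abs_sub _ _
        _ = (∑ g, s (θinv^[m] ω) j g) + ∑ g, u g := by
            rw [Finset.sum_add_distrib]
            congr 1
            · exact Finset.sum_congr rfl fun g _ => abs_of_nonneg ((hsprob _ j).1 g)
            · exact Finset.sum_congr rfl fun g _ => abs_of_nonneg (hu0 g)
        _ = 2 := by rw [(hsprob _ j).2, hu1]; norm_num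
    calc |s ω (m + j) k - s ω m k|
        = |(Pm θ T m (θinv^[m] ω) *ᵥ (s (θinv^[m] ω) j - u)) k| := by rw [h1]
      _ ≤ ∑ k', |(Pm θ T m (θinv^[m] ω) *ᵥ (s (θinv^[m] ω) j - u)) k'| :=
          Finset.single_le_sum
            (f := fun k' => |(Pm θ T m (θinv^[m] ω) *ᵥ (s (θinv^[m] ω) j - u)) k'|)
            (fun k' _ => abs_nonneg _) (Finset.mem_univ k)
      _ ≤ lam ^ (m / L) * ∑ g, |(s (θinv^[m] ω) j - u) g| := h2
      _ ≤ lam ^ (m / L) * 2 := mul_le_mul_of_nonneg_left h3 (pow_nonneg hlam0 _)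
      _ = 2 * lam ^ (m / L) := mul_comm _ _
  have hcauchy : ∀ ω, CauchySeq (s ω) := by
    intro ω
    refine cauchySeq_of_le_tendsto_0 (fun N => 2 * lam ^ (N / L)) ?_ ?_
    · intro n m N hn hm
      have hb0 : (0:ℝ) ≤ 2 * lam ^ (N / L) := by positivity
      rw [dist_pi_le_iff hb0]
      intro k
      rw [Real.dist_eq]
      rcases le_total m n with h | h
      · obtain ⟨j, rfl⟩ := Nat.exists_eq_add_of_le h
        refine (hdist ω m j k).trans ?_
        exact mul_le_mul_of_nonneg_left
          (pow_le_pow_of_le_one hlam0 hlam1.le (Nat.div_le_div_right hm)) (by norm_num)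
      · obtain ⟨j, rfl⟩ := Nat.exists_eq_add_of_le h
        rw [abs_sub_comm]
        refine (hdist ω n j k).trans ?_
        exact mul_le_mul_of_nonneg_left
          (pow_le_pow_of_le_one hlam0 hlam1.le (Nat.div_le_div_right hn)) (by norm_num)
    · have hdiv : Tendsto (fun N : ℕ => N / L) atTop atTop :=
        Filter.tendsto_atTop_atTop.2 fun b =>
          ⟨b * L, fun n hn => (Nat.le_div_iff_mul_le hL0).2 hn⟩
      have h1 := (tendsto_pow_atTop_nhds_zero_of_lt_one hlam0 hlam1).comp hdiv
      have h2 := h1.const_mul (2:ℝ)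
      simpa using h2
  have hconv : ∀ ω, ∃ l, Tendsto (s ω) atTop (𝓝 l) :=
    fun ω => cauchySeq_tendsto_of_complete (hcauchy ω)
  set π : Ω → Fin d → ℝ := fun ω => (hconv ω).choose with hπdef
  have hπ : ∀ ω, Tendsto (s ω) atTop (𝓝 (π ω)) := fun ω => (hconv ω).choose_spec
  have hπk : ∀ ω k, Tendsto (fun m => s ω m k) atTop (𝓝 (π ω k)) := fun ω k =>
    (tendsto_pi_nhds.1 (hπ ω)) k
  have hsmeas : ∀ m k, Measurable fun ω => s ω m k := by
    intro m k
    show Measurable fun ω => ∑ g, Pm θ T m (θinv^[m] ω) k g * u g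
    exact Finset.measurable_sum _ fun g _ =>
      ((Pm_measurable hθ hTmeas m k g).comp (hθinv.iterate m)).mul measurable_const
  have hπmeas : ∀ k, Measurable fun ω => π ω k := fun k =>
    measurable_of_tendsto_metrizable' atTop (fun m => hsmeas m k)
      (tendsto_pi_nhds.2 fun ω => hπk ω k)
  have hπprob : ∀ ω, (∀ k, 0 ≤ π ω k) ∧ ∑ k, π ω k = 1 := by
    intro ω
    constructor
    · exact fun k => ge_of_tendsto' (hπk ω k) fun m => (hsprob ω m).1 k
    · have h1 : Tendsto (fun m => ∑ k, s ω m k) atTop (𝓝 (∑ k, π ω k)) :=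
        tendsto_finset_sum _ fun k _ => hπk ω k
      have h2 : (fun m => ∑ k, s ω m k) = fun _ => (1:ℝ) :=
        funext fun m => (hsprob ω m).2
      rw [h2] at h1
      exact tendsto_nhds_unique h1 tendsto_const_nhds
  have hkey : ∀ n ω, π (θ^[n] ω) = Pm θ T n ω *ᵥ π ω := by
    intro n ω
    have h1 : Tendsto (fun j => s (θ^[n] ω) (j + n)) atTop (𝓝 (π (θ^[n] ω))) :=
      (hπ (θ^[n] ω)).comp (tendsto_add_atTop_nat n)
    have hin : θinv^[n] (θ^[n] ω) = ω := (hinv1.iterate n) ω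
    have heq : (fun j => s (θ^[n] ω) (j + n)) = fun j => Pm θ T n ω *ᵥ s ω j := by
      funext j
      rw [add_comm, hsdec (θ^[n] ω) n j, hin]
    rw [heq] at h1
    have h2 : Tendsto (fun j => Pm θ T n ω *ᵥ s ω j) atTop (𝓝 (Pm θ T n ω *ᵥ π ω)) := by
      rw [tendsto_pi_nhds]
      intro k
      simp only [Matrix.mulVec, dotProduct]
      exact tendsto_finset_sum _ fun g _ => (hπk ω g).const_mul _
    exact tendsto_nhds_unique h1 h2
  have hequiv : ∀ ω, (T (θ ω)).mulVec (π ω) = π (θ ω) := by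
    intro ω
    have h := hkey 1 ω
    rw [Function.iterate_one] at h
    have hPm1 : Pm θ T 1 ω = T (θ ω) := by
      rw [show (1:ℕ) = 0 + 1 from rfl, Pm_succ, Pm_zero, mul_one, Function.iterate_one]
    rw [h, hPm1]
  refine ⟨π, hπmeas, hπprob, hequiv, ?_⟩
  intro x hx hx1 ω n hn
  have hv : ∑ g, (x - π ω) g = 0 := by
    simp only [Pi.sub_apply, Finset.sum_sub_distrib, hx1, (hπprob ω).2, sub_self]
  have h2 : ∑ g, |(x - π ω) g| ≤ 2 := by
    calc ∑ g, |(x - π ω) g| ≤ ∑ g, (|x g| + |π ω g|) :=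
          Finset.sum_le_sum fun g _ => abs_sub _ _
      _ = (∑ g, x g) + ∑ g, π ω g := by
          rw [Finset.sum_add_distrib]
          congr 1
          · exact Finset.sum_congr rfl fun g _ => abs_of_nonneg (hx g)
          · exact Finset.sum_congr rfl fun g _ => abs_of_nonneg ((hπprob ω).1 g)
      _ = 2 := by rw [hx1, (hπprob ω).2]; norm_num
  have h1 := Pm_contract hT hL hblock' hlam hlam0 n ω (x - π ω) hv
  show ∑ k, |(Pm θ T n ω *ᵥ x) k - π (θ^[n] ω) k| ≤ 2 * lam ^ (n / L)
  calc ∑ k, |(Pm θ T n ω *ᵥ x) k - π (θ^[n] ω) k|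
      = ∑ k, |(Pm θ T n ω *ᵥ (x - π ω)) k| := by
        refine Finset.sum_congr rfl fun k _ => ?_
        rw [Matrix.mulVec_sub, hkey n ω]
        rfl
    _ ≤ lam ^ (n / L) * ∑ g, |(x - π ω) g| := h1
    _ ≤ lam ^ (n / L) * 2 := mul_le_mul_of_nonneg_left h2 (pow_nonneg hlam0 _)
    _ = 2 * lam ^ (n / L) := mul_comm _ _
end

section
/- Let G be a finite group, 𝒜 a nonempty finite set, s : 𝒜 → G, and w : 𝒜 → G → ℝ nonnegative weights with ∑_{a ∈ 𝒜} w(a, g) = 1 for every g ∈ G; let V_a := ∑_{g ∈ G} √(w(a, g)) · E_{s(a)·g, g} and Φ(X) := ∑_{a ∈ 𝒜} V_a X V_aᴴ. Fix h ∈ G with h ≠ 1, and for c : G → ℂ set X := ∑_{g ∈ G} c(g) · E_{g, g·h}. Then: (a) Φ(X) = ∑_{a ∈ 𝒜} ∑_{g ∈ G} √(w(a, g) · w(a, g·h)) · c(g) · E_{s(a)·g, s(a)·g·h}; in particular Φ(X)(k, k') = 0 unless k' = k·h; and (b) if q ≥ 0 satisfies ∑_{a ∈ 𝒜} √(w(a,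 g) · w(a, g·h)) ≤ q for every g ∈ G, then ∑_{k ∈ G} | Φ(X)(k, k·h) | ≤ q · ∑_{g ∈ G} |c(g)|. -/
/-!
Each Kraus operator `V a` is the weighted map matrix `e g ↦ √(w a g) • e (s a * g)`, so
conjugating the matrix unit `E_{g, g h}` by it gives `√(w a g) √(w a (g h)) • E_{s a g, s a g h}`:
left translation by `s a` commutes with right translation by `h`, which is why the sector `𝓑_h`
is preserved. The `ℓ¹` bound is the triangle inequality followed, in each Kraus term, by the
change of variables `k = s a * g`.
-/

open Matrix Finset

section WeightedMapMatrix

variable {n α : Type*} [Fintype n] [DecidableEq n]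

def weightedMapMatrix [Semiring α] (σ : n → n) (f : n → α) : Matrix n n α :=
  ∑ g, f g • single (σ g) g 1

theorem weightedMapMatrix_mul_single [Semiring α] (σ : n → n) (f : n → α) (x y : n) (b : α) :
    weightedMapMatrix σ f * single x y b = f x • single (σ x) y b := by
  rw [weightedMapMatrix, sum_mul, sum_eq_single x]
  · rw [smul_mul_assoc, single_mul_single_same, one_mul]
  · intro g _ hg
    rw [smul_mul_assoc, single_mul_single_of_ne (h := hg), smul_zero]
  · simp

theorem single_mul_conjTranspose_weightedMapMatrix [CommSemiring α] [StarRing α]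
    (σ : n → n) (f : n → α) (x y : n) (b : α) :
    single x y b * (weightedMapMatrix σ f)ᴴ = star (f y) • single x (σ y) b := by
  simp only [weightedMapMatrix, conjTranspose_sum, conjTranspose_smul, conjTranspose_single,
    star_one, mul_sum, mul_smul_comm]
  rw [sum_eq_single y]
  · rw [single_mul_single_same, mul_one]
  · intro g _ hg
    rw [single_mul_single_of_ne (h := Ne.symm hg), smul_zero]
  · simp

theorem weightedMapMatrix_mul_single_mul_conjTranspose [CommSemiring α] [StarRing α]
    (σ : n → n) (f : n → α) (x y : n) (b : α) :
    weightedMapMatrix σ f * single x y b * (weightedMapMatrix σ f)ᴴ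
      = (f x * star (f y)) • single (σ x) (σ y) b := by
  rw [weightedMapMatrix_mul_single, smul_mul_assoc,
    single_mul_conjTranspose_weightedMapMatrix, smul_smul]

theorem weightedMapMatrix_mul_sum_mul_conjTranspose [CommSemiring α] [StarRing α]
    (σ τ : n → n) (f c : n → α) :
    weightedMapMatrix σ f * (∑ g, c g • single g (τ g) 1) * (weightedMapMatrix σ f)ᴴ
      = ∑ g, (c g * (f g * star (f (τ g)))) • single (σ g) (σ (τ g)) 1 := by
  rw [mul_sum, sum_mul]
  refine sum_congr rfl fun g _ => ?_
  rw [mul_smul_comm, smul_mul_assoc, weightedMapMatrix_mul_single_mul_conjTranspose, smul_smul]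

end WeightedMapMatrix

section Sector

variable {G α : Type*} [Group G] [Fintype G]

theorem sum_smul_single_mul_left_apply [DecidableEq G] [Semiring α] (t h : G) (d : G → α)
    (k k' : G) :
    (∑ g, d g • single (t * g) (t * g * h) (1 : α)) k k'
      = if k' = k * h then d (t⁻¹ * k) else 0 := by
  have hsupport : ∀ g, (t * g = k ∧ t * g * h = k') ↔ (g = t⁻¹ * k ∧ k' = k * h) := by
    intro g
    constructor
    · rintro ⟨rfl, rfl⟩
      simp
    · rintro ⟨rfl, rfl⟩
      simp
  simp only [Matrix.sum_apply, Matrix.smul_apply, single, of_apply, hsupport]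
  simp [mul_ite, ite_and]

theorem sum_norm_sum_mulLeft_le {𝒜 : Type*} [Fintype 𝒜] [SeminormedRing α]
    (t : 𝒜 → G) (ρ : 𝒜 → G → α) (c : G → α) (q : ℝ) (hq : ∀ g, ∑ a, ‖ρ a g‖ ≤ q) :
    ∑ k, ‖∑ a, ρ a ((t a)⁻¹ * k) * c ((t a)⁻¹ * k)‖ ≤ q * ∑ g, ‖c g‖ :=
  calc ∑ k, ‖∑ a, ρ a ((t a)⁻¹ * k) * c ((t a)⁻¹ * k)‖
      ≤ ∑ k, ∑ a, ‖ρ a ((t a)⁻¹ * k)‖ * ‖c ((t a)⁻¹ * k)‖ :=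
        sum_le_sum fun k _ => (norm_sum_le _ _).trans (sum_le_sum fun a _ => norm_mul_le _ _)
    _ = ∑ a, ∑ g, ‖ρ a g‖ * ‖c g‖ := by
        rw [sum_comm]
        exact sum_congr rfl fun a _ =>
          Equiv.sum_comp (Equiv.mulLeft (t a)⁻¹) fun g => ‖ρ a g‖ * ‖c g‖
    _ = ∑ g, (∑ a, ‖ρ a g‖) * ‖c g‖ := by
        simp only [sum_mul]
        exact sum_comm
    _ ≤ q * ∑ g, ‖c g‖ := by
        rw [mul_sum]
        exact sum_le_sum fun g _ => mul_le_mul_of_nonneg_right (hq g) (norm_nonneg _)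

end Sector

theorem stmt13_general
    {G : Type*} [Group G] [Fintype G] [DecidableEq G]
    {𝒜 : Type*} [Fintype 𝒜]
    (s : 𝒜 → G) (w : 𝒜 → G → ℝ)
    (hw0 : ∀ a g, 0 ≤ w a g)
    (V : 𝒜 → Matrix G G ℂ)
    (hV : ∀ a, V a = ∑ g, (Real.sqrt (w a g) : ℂ) • Matrix.single (s a * g) g 1)
    (Φ : Matrix G G ℂ → Matrix G G ℂ)
    (hΦ : ∀ X, Φ X = ∑ a, V a * X * (V a)ᴴ)
    (h : G) (c : G → ℂ)
    (X : Matrix G G ℂ)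
    (hX : X = ∑ g, c g • Matrix.single g (g * h) 1) :
    (Φ X = ∑ a, ∑ g,
        (((Real.sqrt (w a g * w a (g * h)) : ℝ) : ℂ) * c g) •
          Matrix.single (s a * g) (s a * g * h) 1) ∧
    (∀ k k' : G, k' ≠ k * h → Φ X k k' = 0) ∧
    (∀ q : ℝ, 0 ≤ q →
      (∀ g, ∑ a, Real.sqrt (w a g * w a (g * h)) ≤ q) →
      ∑ k, ‖Φ X k (k * h)‖ ≤ q * ∑ g, ‖c g‖) := by
  have hΦX : Φ X = ∑ a, ∑ g, (((Real.sqrt (w a g * w a (g * h)) : ℝ) : ℂ) * c g) •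
      Matrix.single (s a * g) (s a * g * h) 1 := by
    rw [hΦ, hX]
    refine sum_congr rfl fun a _ => ?_
    rw [show V a = weightedMapMatrix (s a * ·) fun g => (Real.sqrt (w a g) : ℂ) from hV a,
      weightedMapMatrix_mul_sum_mul_conjTranspose]
    refine sum_congr rfl fun g _ => ?_
    congr 1
    · rw [Real.sqrt_mul (hw0 a g), Complex.star_def, Complex.conj_ofReal, Complex.ofReal_mul]
      ring
    · rw [mul_assoc]
  have hentry : ∀ k k', Φ X k k' = if k' = k * h then
      ∑ a, ((Real.sqrt (w a ((s a)⁻¹ * k) * w a ((s a)⁻¹ * k * h)) : ℝ) : ℂ)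
        * c ((s a)⁻¹ * k) else 0 := by
    intro k k'
    rw [hΦX, Matrix.sum_apply]
    simp only [sum_smul_single_mul_left_apply]
    split_ifs <;> simp
  refine ⟨hΦX, fun k k' hk => by rw [hentry, if_neg hk], fun q _ hq => ?_⟩
  simp only [hentry, if_true]
  refine sum_norm_sum_mulLeft_le s (fun a g => ((Real.sqrt (w a g * w a (g * h)) : ℝ) : ℂ)) c q
    fun g => ?_
  simpa only [Complex.norm_real, Real.norm_of_nonneg (Real.sqrt_nonneg _)] using hq g

/-- **Off-diagonal sector invariance and ℓ¹ contraction for the disordered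
group-action channel.**
For `X = ∑ g c g E_{g, gh}` with `h ≠ 1`, the non-selective channel
`Φ X = ∑ a V a X (V a)ᴴ` stays in the sector `𝓑_h`, with the explicit formula
(a), and (b) the ℓ¹ norm of the coefficients contracts by any uniform
Cauchy–Schwarz overlap bound `q`. -/
theorem stmt13
    {G : Type*} [Group G] [Fintype G] [DecidableEq G]
    {𝒜 : Type*} [Fintype 𝒜] [Nonempty 𝒜]
    (s : 𝒜 → G) (w : 𝒜 → G → ℝ)
    (hw0 : ∀ a g, 0 ≤ w a g) (hw1 : ∀ g, ∑ a, w a g = 1)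
    (V : 𝒜 → Matrix G G ℂ)
    (hV : ∀ a, V a = ∑ g, (Real.sqrt (w a g) : ℂ) • Matrix.single (s a * g) g 1)
    (Φ : Matrix G G ℂ → Matrix G G ℂ)
    (hΦ : ∀ X, Φ X = ∑ a, V a * X * (V a)ᴴ)
    (h : G) (hh : h ≠ 1) (c : G → ℂ)
    (X : Matrix G G ℂ)
    (hX : X = ∑ g, c g • Matrix.single g (g * h) 1) :
    (Φ X = ∑ a, ∑ g,
        (((Real.sqrt (w a g * w a (g * h)) : ℝ) : ℂ) * c g) •
          Matrix.single (s a * g) (s a * g * h) 1) ∧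
    (∀ k k' : G, k' ≠ k * h → Φ X k k' = 0) ∧
    (∀ q : ℝ, 0 ≤ q →
      (∀ g, ∑ a, Real.sqrt (w a g * w a (g * h)) ≤ q) →
      ∑ k, ‖Φ X k (k * h)‖ ≤ q * ∑ g, ‖c g‖) :=
  stmt13_general s w hw0 V hV Φ hΦ h c X hX
end

section
/- Let (Ω, 𝓕, μ) be a probability space and θ : Ω → Ω an invertible measure-preserving transformation (θ and θ^{−1} measurable, μ ∘ θ^{−1} = μ). Let γ_* ∈ (0, 1] and let γ : Ω → ℝ be measurable with γ_* ≤ γ(ω) ≤ 1 for μ-almost every ω. Let ρ : Ω → M₂(ℂ) be measurable such that for μ-almost every ω, ρ(ω) is a density matrix (positive semidefinite with trace 1) and Φ_{γ(θω)}(ρ(ω)) = ρ(θω). Then ρ(ω) = E₀₀ (the matrix |0⟩⟨0|) for μ-almost every ω. -/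
open Matrix MeasureTheory
open scoped ComplexOrder

/-- Kraus operator `V₀` of the amplitude-damping channel. -/
noncomputable def adV0 (γ : ℝ) : Matrix (Fin 2) (Fin 2) ℂ :=
  !![1, 0; 0, (Real.sqrt (1 - γ) : ℂ)]

/-- Kraus operator `V₁` of the amplitude-damping channel. -/
noncomputable def adV1 (γ : ℝ) : Matrix (Fin 2) (Fin 2) ℂ :=
  !![0, (Real.sqrt γ : ℂ); 0, 0]

/-- The amplitude-damping channel `Φ_γ(X) = V₀ X V₀ᴴ + V₁ X V₁ᴴ`. -/
noncomputable def adChannel (γ : ℝ) (X : Matrix (Fin 2) (Fin 2) ℂ) :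
    Matrix (Fin 2) (Fin 2) ℂ :=
  adV0 γ * X * (adV0 γ)ᴴ + adV1 γ * X * (adV1 γ)ᴴ

/-!
The excited-state population `p ω = (ρ ω 1 1).re ∈ [0, 1]` is damped by the channel:
`p (θ ω) = (1 - γ (θ ω)) p ω ≤ (1 - γ_*) p ω`. Since `θ` preserves `μ`, integrating gives
`∫ p ≤ (1 - γ_*) ∫ p`, hence `p = 0` a.e.; by positivity, a density matrix with vanishing
`(1, 1)` entry is `|0⟩⟨0|`.
-/

namespace Matrix.PosSemidef

variable {n 𝕜 : Type*} [Fintype n] [RCLike 𝕜] {A : Matrix n n 𝕜}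

lemma apply_eq_zero_of_diag_eq_zero_right (hA : A.PosSemidef) {i : n} (hi : A i i = 0)
    (j : n) : A j i = 0 := by
  classical
  have := (hA.dotProduct_mulVec_zero_iff (Pi.single i 1)).mp (by simpa using hi)
  simpa using congrFun this j

lemma apply_eq_zero_of_diag_eq_zero_left (hA : A.PosSemidef) {i : n} (hi : A i i = 0)
    (j : n) : A i j = 0 := by
  rw [← hA.1.apply i j, hA.apply_eq_zero_of_diag_eq_zero_right hi, star_zero]

end Matrix.PosSemidef

section DensityMatrix

variable {A : Matrix (Fin 2) (Fin 2) ℂ}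

lemma re_apply_one_one_mem_Icc (hA : A.PosSemidef) (htr : A.trace = 1) :
    (A 1 1).re ∈ Set.Icc 0 1 := by
  have h00 := (Complex.nonneg_iff.mp (hA.diag_nonneg (i := 0))).1
  have h11 := (Complex.nonneg_iff.mp (hA.diag_nonneg (i := 1))).1
  have hre := congrArg Complex.re htr
  rw [trace_fin_two, Complex.add_re, Complex.one_re] at hre
  exact ⟨h11, by linarith⟩

lemma eq_single_zero_zero_of_re_apply_one_one_eq_zero (hA : A.PosSemidef) (htr : A.trace = 1)
    (h : (A 1 1).re = 0) : A = single 0 0 1 := by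
  have h11 : A 1 1 = 0 := Complex.ext h (Complex.nonneg_iff.mp hA.diag_nonneg).2.symm
  have h00 : A 0 0 = 1 := by simpa [trace_fin_two, h11] using htr
  ext i j
  fin_cases i <;> fin_cases j <;>
    simp [h00, h11, hA.apply_eq_zero_of_diag_eq_zero_left h11,
      hA.apply_eq_zero_of_diag_eq_zero_right h11]

end DensityMatrix

lemma adChannel_apply_one_one {γ : ℝ} (hγ : γ ≤ 1) (X : Matrix (Fin 2) (Fin 2) ℂ) :
    adChannel γ X 1 1 = (1 - γ : ℝ) * X 1 1 := by
  have hsq : (Real.sqrt (1 - γ) : ℂ) * Real.sqrt (1 - γ) = (1 - γ : ℝ) := by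
    rw [← Complex.ofReal_mul, Real.mul_self_sqrt (by linarith)]
  simp only [adChannel, Matrix.add_apply, mul_apply, Fin.sum_univ_two, conjTranspose_apply]
  simp [adV0, adV1, ← hsq]
  ring

theorem MeasureTheory.MeasurePreserving.ae_eq_zero_of_comp_le_mul {α : Type*}
    [MeasurableSpace α] {μ : Measure α} {θ : α → α} (hθ : MeasurePreserving θ μ μ)
    {f : α → ℝ} (hf : Integrable f μ) (hf0 : 0 ≤ᵐ[μ] f) {c : ℝ} (hc : c < 1)
    (hle : ∀ᵐ x ∂μ, f (θ x) ≤ c * f x) : f =ᵐ[μ] 0 := by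
  have hfθ : Integrable (f ∘ θ) μ := (hθ.map_eq ▸ hf).comp_aemeasurable hθ.aemeasurable
  have hint_le : ∫ x, f x ∂μ ≤ c * ∫ x, f x ∂μ := calc
    ∫ x, f x ∂μ = ∫ x, f (θ x) ∂μ := by
      rw [← integral_map hθ.aemeasurable (by rw [hθ.map_eq]; exact hf.1), hθ.map_eq]
    _ ≤ ∫ x, c * f x ∂μ := integral_mono_ae hfθ (hf.const_mul c) hle
    _ = c * ∫ x, f x ∂μ := integral_const_mul c f
  have hint_nonneg : 0 ≤ ∫ x, f x ∂μ := integral_nonneg_of_ae hf0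
  refine (integral_eq_zero_iff_of_nonneg_ae hf0 hf).mp ?_
  nlinarith

theorem stmt15_general
    {Ω : Type*} [MeasurableSpace Ω] (μ : Measure Ω) [IsProbabilityMeasure μ]
    (θ : Ω → Ω) (hmp : MeasurePreserving θ μ μ)
    (γstar : ℝ) (hγstar0 : 0 < γstar)
    (γ : Ω → ℝ) (hγbdd : ∀ᵐ ω ∂μ, γstar ≤ γ ω ∧ γ ω ≤ 1)
    (ρ : Ω → Matrix (Fin 2) (Fin 2) ℂ)
    (hρmeas : ∀ i j, Measurable fun ω => ρ ω i j)
    (hρ : ∀ᵐ ω ∂μ, (ρ ω).PosSemidef ∧ (ρ ω).trace = 1 ∧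
      adChannel (γ (θ ω)) (ρ ω) = ρ (θ ω)) :
    ∀ᵐ ω ∂μ, ρ ω = Matrix.single 0 0 1 := by
  set p : Ω → ℝ := fun ω => (ρ ω 1 1).re
  have hp_mem : ∀ᵐ ω ∂μ, p ω ∈ Set.Icc 0 1 := by
    filter_upwards [hρ] with ω hω
    exact re_apply_one_one_mem_Icc hω.1 hω.2.1
  have hp_int : Integrable p μ := by
    refine .of_bound (Complex.measurable_re.comp (hρmeas 1 1)).aestronglyMeasurable 1 ?_
    filter_upwards [hp_mem] with ω hω
    rw [Real.norm_of_nonneg hω.1]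
    exact hω.2
  have hp_contract : ∀ᵐ ω ∂μ, p (θ ω) ≤ (1 - γstar) * p ω := by
    filter_upwards [hρ, hmp.quasiMeasurePreserving.ae hγbdd, hp_mem] with ω hω hγω hpω
    have hp_step : p (θ ω) = (1 - γ (θ ω)) * p ω := by
      simp only [p, ← hω.2.2, adChannel_apply_one_one hγω.2, Complex.re_ofReal_mul]
    rw [hp_step]
    exact mul_le_mul_of_nonneg_right (by linarith [hγω.1]) hpω.1
  have hp_zero : p =ᵐ[μ] 0 :=
    hmp.ae_eq_zero_of_comp_le_mul hp_int (hp_mem.mono fun _ h => h.1) (by linarith) hp_contract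
  filter_upwards [hρ, hp_zero] with ω hω hpω
  exact eq_single_zero_zero_of_re_apply_one_one_eq_zero hω.1 hω.2.1 hpω

/-- **Uniqueness of the dynamically stationary state for disordered
amplitude damping.**
If `θ` is an invertible measure-preserving transformation, `γ_* ≤ γ ≤ 1` a.e.
with `γ_* > 0`, and `ρ` is a measurable family of density matrices satisfying
the equivariance `Φ_{γ(θω)}(ρ ω) = ρ (θ ω)` a.e., then `ρ ω = |0⟩⟨0|` a.e. -/
theorem stmt15
    {Ω : Type*} [MeasurableSpace Ω] (μ : Measure Ω) [IsProbabilityMeasure μ]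
    (θ θinv : Ω → Ω) (hθ : Measurable θ) (hθinv : Measurable θinv)
    (hinv1 : Function.LeftInverse θinv θ) (hinv2 : Function.RightInverse θinv θ)
    (hmp : MeasurePreserving θ μ μ)
    (γstar : ℝ) (hγstar0 : 0 < γstar) (hγstar1 : γstar ≤ 1)
    (γ : Ω → ℝ) (hγmeas : Measurable γ)
    (hγbdd : ∀ᵐ ω ∂μ, γstar ≤ γ ω ∧ γ ω ≤ 1)
    (ρ : Ω → Matrix (Fin 2) (Fin 2) ℂ)
    (hρmeas : ∀ i j, Measurable fun ω => ρ ω i j)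
    (hρ : ∀ᵐ ω ∂μ, (ρ ω).PosSemidef ∧ (ρ ω).trace = 1 ∧
      adChannel (γ (θ ω)) (ρ ω) = ρ (θ ω)) :
    ∀ᵐ ω ∂μ, ρ ω = Matrix.single 0 0 1 :=
  stmt15_general μ θ hmp γstar hγstar0 γ hγbdd ρ hρmeas hρ
end

section
/- Let p, γ ∈ (0, 1) and define the four Kraus matrices K₀ := √p · [[1, 0], [0, √(1−γ)]], K₁ := √p · [[0, √γ], [0, 0]], K₂ := √(1−p) · [[√(1−γ), 0], [0, 1]], K₃ := √(1−p) · [[0, 0], [√γ, 0]] (2 × 2 complex matrices). Then ∑_{a=0}^{3} K_aᴴ K_a = 1, and the generalized amplitude-damping channel Φ(X) := ∑_{a=0}^{3} K_a X K_aᴴ maps every nonzero positive semidefinite 2 × 2 complex matrix X to a positive definite matrix. -/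
open Matrix
open scoped ComplexOrder

/-!
Since `X` is positive semidefinite, `vᴴ Φ(X) v = ∑ₐ (Kₐᴴ v)ᴴ X (Kₐᴴ v)` is a sum of nonnegative
terms, and it vanishes only if `X` annihilates every `Kₐᴴ v`. For `v ≠ 0` these vectors span `ℂ²`:
if `v₀ ≠ 0`, then `K₁ᴴ v` is a nonzero multiple of `e₁` and `K₀ᴴ v ∈ √p v₀ e₀ + ℂ e₁`; if `v₁ ≠ 0`,
the same holds for `K₃ᴴ v`, `K₂ᴴ v` with the roles of `e₀`, `e₁` exchanged.
-/

namespace Matrix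

variable {𝕜 ι m n : Type*} [RCLike 𝕜] [Fintype ι] [Fintype m] [Fintype n]

lemma star_dotProduct_sum_mul_mul_conjTranspose_mulVec (K : ι → Matrix m n 𝕜)
    (X : Matrix n n 𝕜) (v : m → 𝕜) :
    star v ⬝ᵥ (∑ a, K a * X * (K a)ᴴ) *ᵥ v =
      ∑ a, star ((K a)ᴴ *ᵥ v) ⬝ᵥ X *ᵥ ((K a)ᴴ *ᵥ v) := by
  simp only [sum_mulVec, dotProduct_sum, ← mulVec_mulVec, star_mulVec,
    conjTranspose_conjTranspose, dotProduct_mulVec]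

lemma PosSemidef.posDef_sum_mul_mul_conjTranspose {X : Matrix n n 𝕜} (hX : X.PosSemidef)
    {K : ι → Matrix m n 𝕜} (hK : ∀ v ≠ 0, ∃ a, X *ᵥ ((K a)ᴴ *ᵥ v) ≠ 0) :
    (∑ a, K a * X * (K a)ᴴ).PosDef := by
  have hΦ : (∑ a, K a * X * (K a)ᴴ).PosSemidef :=
    posSemidef_sum _ fun a _ => hX.mul_mul_conjTranspose_same (K a)
  refine .of_dotProduct_mulVec_pos hΦ.isHermitian fun v hv => ?_
  obtain ⟨a, ha⟩ := hK v hv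
  rw [star_dotProduct_sum_mul_mul_conjTranspose_mulVec]
  exact Finset.sum_pos' (fun _ _ => hX.dotProduct_mulVec_nonneg _) ⟨a, Finset.mem_univ a,
    (hX.dotProduct_mulVec_nonneg _).lt_of_ne' ((hX.dotProduct_mulVec_zero_iff _).not.mpr ha)⟩

end Matrix

noncomputable def gadKraus (p γ : ℝ) : Fin 4 → Matrix (Fin 2) (Fin 2) ℂ :=
  ![(Real.sqrt p : ℂ) • !![1, 0; 0, (Real.sqrt (1 - γ) : ℂ)],
    (Real.sqrt p : ℂ) • !![0, (Real.sqrt γ : ℂ); 0, 0],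
    (Real.sqrt (1 - p) : ℂ) • !![(Real.sqrt (1 - γ) : ℂ), 0; 0, 1],
    (Real.sqrt (1 - p) : ℂ) • !![0, 0; (Real.sqrt γ : ℂ), 0]]

lemma gadKraus_sum_conjTranspose_mul_self {p γ : ℝ} (hp0 : 0 ≤ p) (hp1 : p ≤ 1)
    (hγ0 : 0 ≤ γ) (hγ1 : γ ≤ 1) :
    ∑ a, (gadKraus p γ a)ᴴ * gadKraus p γ a = 1 := by
  ext i j
  fin_cases i <;> fin_cases j <;>
    simp [gadKraus, Fin.sum_univ_four, mul_apply, Fin.sum_univ_two, conjTranspose_apply,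
      one_apply] <;>
    ring_nf <;>
    simp [← Complex.ofReal_pow, hp0, hp1, hγ0, hγ1] <;>
    ring

lemma gadKraus_exists_mulVec_ne_zero {p γ : ℝ} (hp0 : 0 < p) (hp1 : p < 1) (hγ : 0 < γ)
    {X : Matrix (Fin 2) (Fin 2) ℂ} (hX : X ≠ 0) {v : Fin 2 → ℂ} (hv : v ≠ 0) :
    ∃ a, X *ᵥ ((gadKraus p γ a)ᴴ *ᵥ v) ≠ 0 := by
  by_contra! hker
  have hsp : √p ≠ 0 := Real.sqrt_ne_zero'.2 hp0
  have hsq : √(1 - p) ≠ 0 := Real.sqrt_ne_zero'.2 (sub_pos.2 hp1)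
  have hsg : √γ ≠ 0 := Real.sqrt_ne_zero'.2 hγ
  apply hX
  obtain hv0 | hv1 : v 0 ≠ 0 ∨ v 1 ≠ 0 := Fin.exists_fin_two.mp (Function.ne_iff.mp hv)
  · have hcol1 := hker 1
    have hcol0 := hker 0
    simp [gadKraus, hv0, hsp, hsg] at hcol1
    simp [gadKraus, hcol1, hv0, hsp] at hcol0
    ext i j
    fin_cases i <;> fin_cases j <;> simp [hcol0, hcol1]
  · have hcol0 := hker 3
    have hcol1 := hker 2
    simp [gadKraus, hv1, hsq, hsg] at hcol0
    simp [gadKraus, hcol0, hv1, hsq] at hcol1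
    ext i j
    fin_cases i <;> fin_cases j <;> simp [hcol0, hcol1]

/-- **Strict positivity of the generalized amplitude-damping channel.**
The four GAD Kraus operators form a perfect measurement
(`∑ Kᴴ K = 1`), and the channel `X ↦ ∑ K X Kᴴ` sends every nonzero positive
semidefinite `2 × 2` matrix to a positive definite one. -/
theorem stmt17 (p γ : ℝ) (hp : p ∈ Set.Ioo (0 : ℝ) 1) (hγ : γ ∈ Set.Ioo (0 : ℝ) 1)
    (K : Fin 4 → Matrix (Fin 2) (Fin 2) ℂ)
    (hK0 : K 0 = (Real.sqrt p : ℂ) • !![1, 0; 0, (Real.sqrt (1 - γ) : ℂ)])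
    (hK1 : K 1 = (Real.sqrt p : ℂ) • !![0, (Real.sqrt γ : ℂ); 0, 0])
    (hK2 : K 2 = (Real.sqrt (1 - p) : ℂ) • !![(Real.sqrt (1 - γ) : ℂ), 0; 0, 1])
    (hK3 : K 3 = (Real.sqrt (1 - p) : ℂ) • !![0, 0; (Real.sqrt γ : ℂ), 0]) :
    (∑ a, (K a)ᴴ * K a = 1) ∧
    (∀ X : Matrix (Fin 2) (Fin 2) ℂ, X.PosSemidef → X ≠ 0 →
      (∑ a, K a * X * (K a)ᴴ).PosDef) := by
  obtain ⟨hp0, hp1⟩ := hp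
  obtain ⟨hγ0, hγ1⟩ := hγ
  obtain rfl : K = gadKraus p γ := by
    funext a
    fin_cases a
    exacts [hK0, hK1, hK2, hK3]
  exact ⟨gadKraus_sum_conjTranspose_mul_self hp0.le hp1.le hγ0.le hγ1.le,
    fun X hX hX0 => hX.posDef_sum_mul_mul_conjTranspose fun _ hv =>
      gadKraus_exists_mulVec_ne_zero hp0 hp1 hγ0 hX0 hv⟩
end

section
/- For p ∈ (0, 1) define on 2 × 2 complex matrices the keep–switch channel Φ_p(X) := V_K X V_Kᴴ + V_S X V_Sᴴ, where V_K := [[√p, 0], [0, √(1−p)]] and V_S := [[0, √p], [√(1−p), 0]]. Let p_1, …, p_n ∈ (0, 1) and set λ_n := 2^{n−1} · ∏_{j=1}^n √(p_j (1 − p_j)). Then for every 2 × 2 complex matrix X, writing t := X₀₀ + X₁₁ and s := X₀₁ + X₁₀: (a) (Φ_{p_n} ∘ ⋯ ∘ Φ_{p_1})(X) = [[p_n · t, λ_n · s], [λ_n · s, (1 − p_n) · t]]; and (b) if n ≥ 2, p_1 ≠ 1/2, and X is positive semidefinite and nonzero, then (Φ_{p_n} ∘ ⋯ ∘ Φ_{p_1})(X)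 is positive definite. -/
open Matrix
open scoped ComplexOrder

/-- "Keep" Kraus operator of the keep–switch channel. -/
noncomputable def ksVK (p : ℝ) : Matrix (Fin 2) (Fin 2) ℂ :=
  !![(Real.sqrt p : ℂ), 0; 0, (Real.sqrt (1 - p) : ℂ)]

/-- "Switch" Kraus operator of the keep–switch channel. -/
noncomputable def ksVS (p : ℝ) : Matrix (Fin 2) (Fin 2) ℂ :=
  !![0, (Real.sqrt p : ℂ); (Real.sqrt (1 - p) : ℂ), 0]

/-- The keep–switch channel `Φ_p(X) = V_K X V_Kᴴ + V_S X V_Sᴴ`. -/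
noncomputable def ksChannel (p : ℝ) (X : Matrix (Fin 2) (Fin 2) ℂ) :
    Matrix (Fin 2) (Fin 2) ℂ :=
  ksVK p * X * (ksVK p)ᴴ + ksVS p * X * (ksVS p)ᴴ

/-- `ksIter p n X = (Φ_{p n} ∘ ⋯ ∘ Φ_{p 1}) X`. -/
noncomputable def ksIter (p : ℕ → ℝ) :
    ℕ → Matrix (Fin 2) (Fin 2) ℂ → Matrix (Fin 2) (Fin 2) ℂ
  | 0 => fun X => X
  | n + 1 => fun X => ksChannel (p (n + 1)) (ksIter p n X)

/-!
Each `Φ_p` sends `X` to the symmetric matrix with diagonal `(p t, (1 - p) t)` and off-diagonal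
entries `√(p (1 - p)) s`: the trace `t` is preserved and `s` is multiplied by `2 √(p (1 - p))`,
which gives (a) by induction. For (b), the result is a real symmetric matrix with trace `t` and
determinant `p_n (1 - p_n) t² - λ_n² s²`. Testing `X ≥ 0` on the vectors `(1, ±1)` gives
`|s| ≤ t`, and `t > 0` since `X ≠ 0`, while
`λ_n² = p_n (1 - p_n) ∏_{j<n} 4 p_j (1 - p_j) < p_n (1 - p_n)` because `4 p_1 (1 - p_1) < 1`.
A Hermitian `2 × 2` matrix with positive trace and determinant is positive definite.
-/

namespace Matrix

variable {𝕜 : Type*} [RCLike 𝕜]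

lemma PosSemidef.trace_pos {n : Type*} [Fintype n] {A : Matrix n n 𝕜} (hA : A.PosSemidef)
    (hA0 : A ≠ 0) : 0 < A.trace :=
  hA.trace_nonneg.lt_of_ne fun h ↦ hA0 (hA.trace_eq_zero_iff.mp h.symm)

lemma IsHermitian.posDef_of_trace_pos_of_det_pos {A : Matrix (Fin 2) (Fin 2) 𝕜}
    (hA : A.IsHermitian) (htr : 0 < A.trace) (hdet : 0 < A.det) : A.PosDef := by
  rw [hA.posDef_iff_eigenvalues_pos]
  have htr' : 0 < hA.eigenvalues 0 + hA.eigenvalues 1 := by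
    rwa [hA.trace_eq_sum_eigenvalues, Fin.sum_univ_two, ← RCLike.ofReal_add,
      RCLike.ofReal_pos] at htr
  have hdet' : 0 < hA.eigenvalues 0 * hA.eigenvalues 1 := by
    rwa [hA.det_eq_prod_eigenvalues, Fin.prod_univ_two, ← RCLike.ofReal_mul,
      RCLike.ofReal_pos] at hdet
  intro i
  fin_cases i
  · exact (pos_and_pos_or_neg_and_neg_of_mul_pos hdet').elim And.left fun h ↦ by linarith
  · exact (pos_and_pos_or_neg_and_neg_of_mul_pos hdet').elim And.right fun h ↦ by linarith

lemma PosSemidef.fin_two_exists_real_abs_offDiag_le {X : Matrix (Fin 2) (Fin 2) ℂ}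
    (hX : X.PosSemidef) :
    ∃ t s : ℝ, X 0 0 + X 1 1 = t ∧ X 0 1 + X 1 0 = s ∧ |s| ≤ t := by
  have hplus := hX.dotProduct_mulVec_nonneg ![1, 1]
  have hminus := hX.dotProduct_mulVec_nonneg ![1, -1]
  simp only [dotProduct, mulVec, Fin.sum_univ_two, Pi.star_apply, RCLike.star_def, cons_val_zero,
    cons_val_one, cons_val_fin_one, map_one, map_neg, one_mul, mul_one, mul_neg, neg_mul,
    Complex.nonneg_iff, Complex.add_re, Complex.add_im, Complex.neg_re, Complex.neg_im]
    at hplus hminus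
  refine ⟨(X 0 0 + X 1 1).re, (X 0 1 + X 1 0).re, Complex.ext rfl ?_, Complex.ext rfl ?_,
    abs_le.2 ⟨?_, ?_⟩⟩ <;>
    simp only [Complex.add_re, Complex.add_im, Complex.ofReal_im] <;> linarith

lemma posDef_fin_two_ofReal {a c d : ℝ} (ha : 0 < a) (hd : 0 < d) (h : c ^ 2 < a * d) :
    (!![(a : ℂ), c; c, d]).PosDef := by
  refine IsHermitian.posDef_of_trace_pos_of_det_pos ?_ ?_ ?_
  · ext i j
    fin_cases i <;> fin_cases j <;> simp
  · rw [trace_fin_two_of]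
    exact_mod_cast add_pos ha hd
  · rw [det_fin_two_of, sub_pos]
    exact_mod_cast (by nlinarith : c * c < a * d)

end Matrix

lemma Finset.prod_lt_one_of_mem {ι R : Type*} [CommMonoidWithZero R] [PartialOrder R]
    [ZeroLEOneClass R] [PosMulMono R] {s : Finset ι} {f : ι → R} {i : ι}
    (hf0 : ∀ j ∈ s, 0 ≤ f j) (hf1 : ∀ j ∈ s, f j ≤ 1) (hi : i ∈ s) (hfi : f i < 1) :
    ∏ j ∈ s, f j < 1 := by
  classical
  rw [← Finset.mul_prod_erase s f hi]
  exact mul_lt_one_of_nonneg_of_lt_one_left (hf0 i hi) hfi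
    (Finset.prod_le_one (fun j hj ↦ hf0 j (Finset.mem_of_mem_erase hj))
      fun j hj ↦ hf1 j (Finset.mem_of_mem_erase hj))

lemma four_mul_mul_one_sub_le_one (x : ℝ) : 4 * x * (1 - x) ≤ 1 := by
  nlinarith [sq_nonneg (2 * x - 1)]

lemma four_mul_mul_one_sub_lt_one {x : ℝ} (hx : x ≠ 1 / 2) : 4 * x * (1 - x) < 1 := by
  have : 0 < (2 * x - 1) ^ 2 := sq_pos_of_ne_zero fun h ↦ hx (by linarith)
  nlinarith

lemma ksChannel_apply {p : ℝ} (hp : p ∈ Set.Icc (0 : ℝ) 1) (Y : Matrix (Fin 2) (Fin 2) ℂ) :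
    ksChannel p Y =
      !![(p : ℂ) * (Y 0 0 + Y 1 1), (√(p * (1 - p)) : ℂ) * (Y 0 1 + Y 1 0);
         (√(p * (1 - p)) : ℂ) * (Y 0 1 + Y 1 0), ((1 - p : ℝ) : ℂ) * (Y 0 0 + Y 1 1)] := by
  have hpp : (√p : ℂ) * √p = p := by exact_mod_cast Real.mul_self_sqrt hp.1
  have hqq : (√(1 - p) : ℂ) * √(1 - p) = 1 - p := by
    exact_mod_cast Real.mul_self_sqrt (sub_nonneg.2 hp.2)
  have hpq : (√p : ℂ) * √(1 - p) = √(p * (1 - p)) := by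
    exact_mod_cast (Real.sqrt_mul hp.1 _).symm
  ext i j
  fin_cases i <;> fin_cases j <;>
    simp [ksChannel, ksVK, ksVS, vecMul, dotProduct, mul_apply, Fin.sum_univ_two]
  · linear_combination (Y 0 0 + Y 1 1) * hpp
  · linear_combination (Y 0 1 + Y 1 0) * hpq
  · linear_combination (Y 0 1 + Y 1 0) * hpq
  · linear_combination (Y 0 0 + Y 1 1) * hqq

/-- The `λ_n` of (a). -/
noncomputable def ksCoherence (p : ℕ → ℝ) (n : ℕ) : ℝ :=
  2 ^ (n - 1) * ∏ j ∈ Finset.Icc 1 n, √(p j * (1 - p j))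

lemma ksCoherence_one (p : ℕ → ℝ) : ksCoherence p 1 = √(p 1 * (1 - p 1)) := by
  simp [ksCoherence]

lemma ksCoherence_succ (p : ℕ → ℝ) {n : ℕ} (hn : 1 ≤ n) :
    ksCoherence p (n + 1) = 2 * √(p (n + 1) * (1 - p (n + 1))) * ksCoherence p n := by
  obtain ⟨m, rfl⟩ := Nat.exists_eq_add_of_le' hn
  rw [ksCoherence, ksCoherence, Finset.prod_Icc_succ_top (by omega)]
  simp only [Nat.add_sub_cancel, pow_succ]
  ring

lemma ksCoherence_sq (p : ℕ → ℝ) (n : ℕ)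
    (hp : ∀ j, 1 ≤ j → j ≤ n + 1 → p j ∈ Set.Icc (0 : ℝ) 1) :
    ksCoherence p (n + 1) ^ 2 =
      p (n + 1) * (1 - p (n + 1)) * ∏ j ∈ Finset.Icc 1 n, 4 * p j * (1 - p j) := by
  have hsq : ∀ j, 1 ≤ j → j ≤ n + 1 → √(p j * (1 - p j)) ^ 2 = p j * (1 - p j) := fun j h1 h2 ↦
    Real.sq_sqrt (mul_nonneg (hp j h1 h2).1 (sub_nonneg.2 (hp j h1 h2).2))
  induction n with
  | zero => simp [ksCoherence_one, hsq 1 le_rfl le_rfl]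
  | succ n ih =>
    rw [ksCoherence_succ p (by omega), mul_pow, mul_pow, hsq _ (by omega) le_rfl,
      ih (fun j h1 h2 ↦ hp j h1 (by omega)) (fun j h1 h2 ↦ hsq j h1 (by omega)),
      Finset.prod_Icc_succ_top (by omega)]
    ring

lemma ksIter_eq (p : ℕ → ℝ) {n : ℕ} (hn : 1 ≤ n)
    (hp : ∀ j, 1 ≤ j → j ≤ n → p j ∈ Set.Icc (0 : ℝ) 1) (X : Matrix (Fin 2) (Fin 2) ℂ) :
    ksIter p n X =
      !![(p n : ℂ) * (X 0 0 + X 1 1), (ksCoherence p n : ℂ) * (X 0 1 + X 1 0);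
         (ksCoherence p n : ℂ) * (X 0 1 + X 1 0), ((1 - p n : ℝ) : ℂ) * (X 0 0 + X 1 1)] := by
  induction n, hn using Nat.le_induction with
  | base => rw [ksCoherence_one]; exact ksChannel_apply (hp 1 le_rfl le_rfl) X
  | succ n hn ih =>
    change ksChannel _ (ksIter p n X) = _
    rw [ih (fun j h1 h2 ↦ hp j h1 (by omega)), ksChannel_apply (hp _ (by omega) le_rfl),
      ksCoherence_succ p hn]
    ext i j
    fin_cases i <;> fin_cases j <;>
      simp only [Fin.zero_eta, Fin.mk_one, of_apply, cons_val_zero, cons_val_one,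
        cons_val_fin_one] <;>
      push_cast <;> ring

lemma ksCoherence_sq_lt (p : ℕ → ℝ) {n : ℕ} (hn : 2 ≤ n)
    (hp : ∀ j, 1 ≤ j → j ≤ n → p j ∈ Set.Ioo (0 : ℝ) 1) (hp1 : p 1 ≠ 1 / 2) :
    ksCoherence p n ^ 2 < p n * (1 - p n) := by
  obtain ⟨m, rfl⟩ : ∃ m, n = m + 1 := ⟨n - 1, by omega⟩
  obtain ⟨hpn0, hpn1⟩ := hp (m + 1) (by omega) le_rfl
  rw [ksCoherence_sq p m fun j h1 h2 ↦ Set.Ioo_subset_Icc_self (hp j h1 h2)]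
  refine mul_lt_of_lt_one_right (mul_pos hpn0 (sub_pos.2 hpn1))
    (Finset.prod_lt_one_of_mem (fun j hj ↦ ?_) (fun j _ ↦ four_mul_mul_one_sub_le_one (p j))
      (Finset.mem_Icc.2 ⟨le_rfl, by omega⟩) (four_mul_mul_one_sub_lt_one hp1))
  obtain ⟨hj1, hjm⟩ := Finset.mem_Icc.1 hj
  obtain ⟨hpj0, hpj1⟩ := hp j hj1 (by omega)
  have := sub_pos.2 hpj1
  positivity

/-- **Explicit formula and eventual strict positivity for the keep–switch
channel.**  With `λ_n = 2^{n-1} ∏_{j=1}^n √(p_j (1-p_j))`, `t = X₀₀ + X₁₁` and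
`s = X₀₁ + X₁₀`, (a) gives the form of `(Φ_{p n} ∘ ⋯ ∘ Φ_{p 1})(X)`, and (b)
for `n ≥ 2`, `p 1 ≠ 1/2` and nonzero positive semidefinite `X`, the result is
positive definite. -/
theorem stmt18 (p : ℕ → ℝ) (n : ℕ) (hn : 1 ≤ n)
    (hp : ∀ j, 1 ≤ j → j ≤ n → p j ∈ Set.Ioo (0 : ℝ) 1)
    (lam : ℝ)
    (hlam : lam = 2 ^ (n - 1) * ∏ j ∈ Finset.Icc 1 n, Real.sqrt (p j * (1 - p j)))
    (X : Matrix (Fin 2) (Fin 2) ℂ) :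
    (ksIter p n X =
      !![((p n : ℝ) : ℂ) * (X 0 0 + X 1 1), (lam : ℂ) * (X 0 1 + X 1 0);
         (lam : ℂ) * (X 0 1 + X 1 0), ((1 - p n : ℝ) : ℂ) * (X 0 0 + X 1 1)]) ∧
    (2 ≤ n → p 1 ≠ 1 / 2 → X.PosSemidef → X ≠ 0 → (ksIter p n X).PosDef) := by
  subst hlam
  have hformula := ksIter_eq p hn (fun j h1 h2 ↦ Set.Ioo_subset_Icc_self (hp j h1 h2)) X
  refine ⟨hformula, fun hn2 hp1 hX hX0 ↦ ?_⟩
  obtain ⟨t, s, ht, hs, hst⟩ := hX.fin_two_exists_real_abs_offDiag_le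
  have htpos : 0 < t := by
    have := hX.trace_pos hX0
    rwa [trace_fin_two, ht, Complex.zero_lt_real] at this
  obtain ⟨hpn0, hpn1⟩ := hp n hn le_rfl
  rw [hformula, ht, hs]
  simp only [← Complex.ofReal_mul]
  refine posDef_fin_two_ofReal (mul_pos hpn0 htpos) (mul_pos (sub_pos.2 hpn1) htpos) ?_
  calc (ksCoherence p n * s) ^ 2 = ksCoherence p n ^ 2 * s ^ 2 := by ring
    _ ≤ ksCoherence p n ^ 2 * t ^ 2 := by
      gcongr ksCoherence p n ^ 2 * ?_
      exact sq_le_sq' (neg_le_of_abs_le hst) (le_of_abs_le hst)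
    _ < p n * (1 - p n) * t ^ 2 := by gcongr; exact ksCoherence_sq_lt p hn2 hp hp1
    _ = p n * t * ((1 - p n) * t) := by ring
end
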